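/- arXiv:1606.03595 — 3 statements merged into one kernel-verified Lean document; each statement's English description precedes it below -/
import Mathlib

section
/- Every strictly stable matching is assortative: if μ is strictly stable, μ j = some i, μ k = some l, and r i < r l, then ρ j < ρ k. That is, lenders offering lower rates are matched to borrowers with lower default probabilities. -/
def IsMatching {L B : Type*} (μ : B → Option L) : Prop :=
  ∀ ⦃j j' : B⦄ ⦃i : L⦄, μ j = some i → μ j' = some i → j = j'

def Vol {L B : Type*} [Fintype B] [DecidableEq L] (μ : B → Option L) : ℕ :=
  (Finset.univ.filter fun j : B => μ j ≠ none).card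

def StrictStable {L B : Type*} (r : L → ℝ) (ρ : B → ℝ) (rbar : B → ℝ)
    (μ : B → Option L) : Prop :=
  (∀ j i, μ j = some i → r i < rbar j) ∧
  ¬ ∃ (i : L) (j : B), μ j ≠ some i ∧
      ((∀ l, μ j = some l → r i < r l) ∧ (μ j = none → r i < rbar j)) ∧
      ((¬ ∃ k, μ k = some i) ∨ ∃ k, μ k = some i ∧ ρ j < ρ k)

def StrictStableTax {L B : Type*} (r : L → ℝ) (ρ : B → ℝ) (rbar : B → ℝ)
    (τ : L → B → ℝ) (μ : B → Option L) : Prop :=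
  (∀ j i, μ j = some i → ¬ rbar j < r i + τ i j) ∧
  ¬ ∃ (i : L) (j : B), μ j ≠ some i ∧
      ((∀ l, μ j = some l → r i + τ i j < r l + τ l j) ∧
        (μ j = none → r i + τ i j < rbar j)) ∧
      ((¬ ∃ k, μ k = some i) ∨ ∃ k, μ k = some i ∧ ρ j < ρ k)

def Feasible {L B : Type*} (r : L → ℝ) (rbar : B → ℝ) (μ : B → Option L) : Prop :=
  ∀ j i, μ j = some i → r i < rbar j

/-- **Strictly stable matchings are assortative.** If `μ` is strictly stable, `μ j = some i`,
`μ k = some l` and `r i < r l`, then `ρ j < ρ k`: lenders offering lower rates are matched to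
borrowers with lower default probabilities. -/
theorem strict_stable_assortative {L B : Type*}
    (r : L → ℝ) (ρ : B → ℝ) (rbar : B → ℝ)
    (hr : Function.Injective r) (hρ : Function.Injective ρ)
    (hrbar : ∀ i j, r i ≠ rbar j)
    (μ : B → Option L) (hμ : IsMatching μ) (hstab : StrictStable r ρ rbar μ)
    (i l : L) (j k : B) (hj : μ j = some i) (hk : μ k = some l) (hil : r i < r l) :
    ρ j < ρ k := by
  by_contra h
  have hil' : i ≠ l := fun e => by simp [e] at hil
  have hjk : j ≠ k := fun e => hil' (by rw [e, hk] at hj; exact (Option.some.inj hj).symm)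
  have hρkj : ρ k < ρ j := lt_of_le_of_ne (not_lt.mp h) (fun e => hjk (hρ e).symm)
  exact hstab.2 ⟨i, k, fun e => hil' (Option.some.inj (hk.symm.trans e)).symm,
    ⟨fun l' hl' => by rw [hk] at hl'; rw [← Option.some.inj hl']; exact hil,
     fun e => by rw [e] at hk; exact absurd hk (by simp)⟩,
    Or.inr ⟨j, hj, hρkj⟩⟩
end

section
/- Let μ be any matching that is feasible, i.e. r i < r̄ j for every matched pair μ j = some i. Then there exist taxes τ : L → B → ℝ with τ i j ≥ 0 for all i, j such that μ is strictly stable under τ and every matching that is strictly stable under τ equals μ. -/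
/-- **Equilibrium uniqueness under a systemic risk tax, with strict preferences.** Any
feasible matching can be sustained as the unique strictly stable matching under an
appropriately chosen nonnegative transaction-specific tax. -/
theorem srt_unique_strict_stable {L B : Type*} [Fintype L] [Fintype B]
    (r : L → ℝ) (ρ : B → ℝ) (rbar : B → ℝ)
    (hr : Function.Injective r) (hρ : Function.Injective ρ)
    (hrbar : ∀ i j, r i ≠ rbar j)
    (μ : B → Option L) (hμ : IsMatching μ) (hfeas : Feasible r rbar μ) :
    ∃ τ : L → B → ℝ, (∀ i j, 0 ≤ τ i j) ∧
      StrictStableTax r ρ rbar τ μ ∧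
      ∀ μ' : B → Option L, IsMatching μ' → StrictStableTax r ρ rbar τ μ' → μ' = μ := by
  classical
  set m : B → ℝ := fun j => (μ j).elim 0 r with hm
  set τ : L → B → ℝ := fun i j =>
    if μ j = some i then 0 else 1 + max 0 (max (rbar j - r i) (m j - r i)) with hτ
  have hτ0 : ∀ i j, μ j = some i → τ i j = 0 := by
    intro i j h; simp [hτ, h]
  have hτbig : ∀ i j, μ j ≠ some i → rbar j + 1 ≤ r i + τ i j ∧ m j + 1 ≤ r i + τ i j := by
    intro i j h
    have : τ i j = 1 + max 0 (max (rbar j - r i) (m j - r i)) := by simp [hτ, h]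
    rw [this]
    constructor
    · have := le_max_left (rbar j - r i) (m j - r i)
      have h2 := le_max_right (0:ℝ) (max (rbar j - r i) (m j - r i))
      linarith
    · have := le_max_right (rbar j - r i) (m j - r i)
      have h2 := le_max_right (0:ℝ) (max (rbar j - r i) (m j - r i))
      linarith
  refine ⟨τ, ?_, ⟨?_, ?_⟩, ?_⟩
  · intro i j
    by_cases h : μ j = some i
    · simp [hτ, h]
    · have : τ i j = 1 + max 0 (max (rbar j - r i) (m j - r i)) := by simp [hτ, h]
      rw [this]
      have := le_max_left (0:ℝ) (max (rbar j - r i) (m j - r i))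
      linarith
  · intro j i h
    rw [hτ0 i j h]
    have := hfeas j i h
    linarith
  · rintro ⟨i, j, hne, ⟨h1, h2⟩, _⟩
    obtain ⟨hb1, hb2⟩ := hτbig i j hne
    cases hj : μ j with
    | none =>
      have := h2 hj
      linarith
    | some l =>
      have hl := h1 l hj
      rw [hτ0 l j hj] at hl
      have hml : m j = r l := by simp [hm, hj]
      rw [hml] at hb2
      linarith
  · rintro μ' hμ' ⟨hA, hB⟩
    have key : ∀ j i, μ' j = some i → μ j = some i := by
      intro j i h
      by_contra hne
      have h1 := hA j i h
      obtain ⟨hb1, _⟩ := hτbig i j hne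
      exact h1 (by linarith)
    funext j
    cases h' : μ' j with
    | some i => rw [key j i h']
    | none =>
      cases h : μ j with
      | none => rfl
      | some i =>
        exfalso
        apply hB
        refine ⟨i, j, by simp [h'], ⟨?_, ?_⟩, Or.inl ?_⟩
        · intro l hl; rw [h'] at hl; exact absurd hl (by simp)
        · intro _
          rw [hτ0 i j h]
          have := hfeas j i h
          linarith
        · rintro ⟨k, hk⟩
          have hk' := key k i hk
          have : k = j := hμ hk' h
          rw [this, h'] at hk
          exact absurd hk (by simp)
end

section
/- Let f : (B → Option L) → ℝ be an arbitrary function (interpreted as the expected systemic loss of the exposure network formed by a matching; no property of f is used). Let κ ≥ 0 be a Tobin-like tax with r i + κ ≠ r̄ j for all i, j, and let μ* be a matching that is strictly stable for the shifted rates (i.e. strictly stable with lending rates i ↦ r i + κ in place of r, with ρ and r̄ unchanged). Then there exist taxes τ : L → B → ℝ with τ i j ≥ 0 and a feasible matching μ' such that: μ' is strictly stable under τ and every matching strictly stable under τ equals μ'; Vol(μ') ≥ Vol(μ*); f(μ') ≤ f(μ*); and f(μ') ≤ f(μ) for every feasible matching μ with Vol(μ) ≥ Vol(μ*). -/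
/-- **Systemic risk tax dominates a Tobin-like tax, strict preferences.** For any matching
`μ*` strictly stable for the Tobin-shifted rates `fun i => r i + κ` (`κ ≥ 0`), there is a
nonnegative transaction-specific tax `τ` sustaining, as the unique strictly stable matching
under `τ`, a feasible matching `μ'` with at least the volume of `μ*`, at most its expected
systemic loss `f`, and minimal `f` among all feasible matchings with at least the volume
of `μ*`. -/
theorem srt_dominates_tobin_strict_pref {L B : Type*} [Fintype L] [Fintype B] [DecidableEq L]
    (r : L → ℝ) (ρ : B → ℝ) (rbar : B → ℝ)
    (hr : Function.Injective r) (hρ : Function.Injective ρ)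
    (hrbar : ∀ i j, r i ≠ rbar j)
    (f : (B → Option L) → ℝ)
    (κ : ℝ) (hκ : 0 ≤ κ) (hκbar : ∀ i j, r i + κ ≠ rbar j)
    (μstar : B → Option L) (hμ : IsMatching μstar)
    (hstab : StrictStable (fun i => r i + κ) ρ rbar μstar) :
    ∃ (τ : L → B → ℝ) (μ' : B → Option L), (∀ i j, 0 ≤ τ i j) ∧
      IsMatching μ' ∧ Feasible r rbar μ' ∧
      StrictStableTax r ρ rbar τ μ' ∧
      (∀ μ'' : B → Option L, IsMatching μ'' → StrictStableTax r ρ rbar τ μ'' → μ'' = μ') ∧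
      Vol μstar ≤ Vol μ' ∧ f μ' ≤ f μstar ∧
      ∀ μ : B → Option L, IsMatching μ → Feasible r rbar μ →
        Vol μstar ≤ Vol μ → f μ' ≤ f μ := by
  classical
  have hfeas_star : Feasible r rbar μstar := fun j i h =>
    lt_of_le_of_lt (le_add_of_nonneg_right hκ) (hstab.1 j i h)
  set P : (B → Option L) → Prop := fun μ => IsMatching μ ∧ Feasible r rbar μ ∧ Vol μstar ≤ Vol μ
    with hP
  have hstar : P μstar := ⟨hμ, hfeas_star, le_refl _⟩
  obtain ⟨μ', hμ'P, hmin⟩ := Finset.exists_min_image (Finset.univ.filter P) f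
    ⟨μstar, Finset.mem_filter.mpr ⟨Finset.mem_univ _, hstar⟩⟩
  rw [Finset.mem_filter] at hμ'P
  obtain ⟨-, hμ'M, hμ'F, hμ'V⟩ := hμ'P
  have hmin' : ∀ μ, P μ → f μ' ≤ f μ := fun μ hp => hmin μ (Finset.mem_filter.mpr ⟨Finset.mem_univ _, hp⟩)
  -- choose a big constant M
  set s : Finset ℝ := ((Finset.univ.image fun p : L × B => rbar p.2 - r p.1) ∪
      (Finset.univ.image fun p : L × L => r p.2 - r p.1) ∪ {0}) with hs
  have hs0 : (0:ℝ) ∈ s := by simp [hs]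
  set M : ℝ := s.max' ⟨0, hs0⟩ + 1 with hMdef
  have hM1 : ∀ (i : L) (j : B), rbar j - r i < M := by
    intro i j
    have : rbar j - r i ≤ s.max' ⟨0, hs0⟩ := by
      apply Finset.le_max'
      simp only [hs, Finset.mem_union, Finset.mem_image]
      exact Or.inl (Or.inl ⟨(i, j), Finset.mem_univ _, rfl⟩)
    linarith
  have hM2 : ∀ (i l : L), r l - r i < M := by
    intro i l
    have : r l - r i ≤ s.max' ⟨0, hs0⟩ := by
      apply Finset.le_max'
      simp only [hs, Finset.mem_union, Finset.mem_image]
      exact Or.inl (Or.inr ⟨(i, l), Finset.mem_univ _, rfl⟩)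
    linarith
  have hM0 : 0 ≤ M := by
    have : (0:ℝ) ≤ s.max' ⟨0, hs0⟩ := Finset.le_max' _ _ hs0
    linarith
  set τ : L → B → ℝ := fun i j => if μ' j = some i then 0 else M with hτ
  have hτ0 : ∀ i j, 0 ≤ τ i j := by
    intro i j; simp only [hτ]; split <;> simp [hM0]
  have hstabτ : StrictStableTax r ρ rbar τ μ' := by
    constructor
    · intro j i h
      have hτij : τ i j = 0 := if_pos h
      rw [hτij]
      have := hμ'F j i h
      linarith
    · rintro ⟨i, j, hne, ⟨hpref, hnone⟩, -⟩
      have hτij : τ i j = M := by simp [hτ, hne]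
      cases h : μ' j with
      | none =>
        have h1 := hnone h
        have h2 := hM1 i j
        rw [hτij] at h1; linarith
      | some l =>
        have h1 := hpref l h
        have hτl : τ l j = 0 := by simp [hτ, h]
        have h2 := hM2 i l
        rw [hτij, hτl] at h1; linarith
  -- key: any strictly stable matching under τ is a submatching of μ'
  have hsub : ∀ μ'' : B → Option L, StrictStableTax r ρ rbar τ μ'' →
      ∀ j i, μ'' j = some i → μ' j = some i := by
    intro μ'' hS j i h
    by_contra hne
    have h1 := hS.1 j i h
    have hτij : τ i j = M := by simp [hτ, hne]
    rw [hτij] at h1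
    exact h1 (by have := hM1 i j; linarith)
  have huniq : ∀ μ'' : B → Option L, IsMatching μ'' → StrictStableTax r ρ rbar τ μ'' →
      μ'' = μ' := by
    intro μ'' hM'' hS
    funext j
    cases h' : μ'' j with
    | some i => exact (hsub μ'' hS j i h').symm
    | none =>
      cases h : μ' j with
      | none => rfl
      | some i =>
        exfalso
        apply hS.2
        refine ⟨i, j, by simp [h'], ⟨fun l hl => by simp [h'] at hl, fun _ => ?_⟩,
          Or.inl ?_⟩
        · have hτij : τ i j = 0 := by simp [hτ, h]
          rw [hτij]
          have := hμ'F j i h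
          linarith
        · rintro ⟨k, hk⟩
          have hk' := hsub μ'' hS k i hk
          have : k = j := hμ'M hk' h
          rw [this, h'] at hk
          exact (Option.some_ne_none i) hk.symm
  exact ⟨τ, μ', hτ0, hμ'M, hμ'F, hstabτ, huniq, hμ'V, hmin' μstar hstar,
    fun μ hm hf hv => hmin' μ ⟨hm, hf, hv⟩⟩
end
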